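/- arXiv:2107.09114 — 5 statements merged into one kernel-verified Lean document; each statement's English description precedes it below -/
import Mathlib

section
/- Let m be a positive integer, and let p < q be primes with q ≤ m. If α_p and α_q denote the exponents of p and q respectively in the prime factorization of m!, then α_p / α_q ≥ ⌊q/p⌋, i.e., α_p ≥ ⌊q/p⌋ · α_q. -/
/-!
By Legendre's formula both exponents are sums of the quotients `⌊m / p^i⌋` and `⌊m / q^i⌋`
over `i ≥ 1`, so it suffices to compare them termwise. Since `⌊q/p⌋ ≤ ⌊q/p⌋^i`, we have
`⌊q/p⌋ p^i ≤ (⌊q/p⌋ p)^i ≤ q^i`, hence `⌊q/p⌋ ⌊m/q^i⌋ p^i ≤ ⌊m/q^i⌋ q^i ≤ m`.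
-/

namespace Nat

theorem div_mul_pow_le_pow (p q : ℕ) {i : ℕ} (hi : i ≠ 0) : q / p * p ^ i ≤ q ^ i :=
  calc q / p * p ^ i ≤ (q / p) ^ i * p ^ i := by gcongr; exact le_self_pow hi _
    _ = (q / p * p) ^ i := (mul_pow _ _ _).symm
    _ ≤ q ^ i := by gcongr; exact div_mul_le_self q p

theorem div_mul_div_pow_le_div_pow (m : ℕ) {p : ℕ} (hp : 0 < p) (q : ℕ) {i : ℕ} (hi : i ≠ 0) :
    q / p * (m / q ^ i) ≤ m / p ^ i := by
  rw [le_div_iff_mul_le (pow_pos hp i)]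
  calc q / p * (m / q ^ i) * p ^ i = q / p * p ^ i * (m / q ^ i) := by ring
    _ ≤ q ^ i * (m / q ^ i) := by gcongr; exact div_mul_pow_le_pow p q hi
    _ ≤ m := mul_div_le m (q ^ i)

end Nat

theorem factorization_factorial_ratio_general (m p q : ℕ)
    (hp : p.Prime) (hq : q.Prime) :
    (m.factorial.factorization p) ≥ (q / p) * (m.factorial.factorization q) := by
  have hlog (r : ℕ) : Nat.log r m < m + 1 := Nat.lt_succ_of_le (Nat.log_le_self r m)
  rw [Nat.factorization_factorial hp (hlog p), Nat.factorization_factorial hq (hlog q),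
    Finset.mul_sum]
  exact Finset.sum_le_sum fun i hi =>
    Nat.div_mul_div_pow_le_div_pow m hp.pos q (Nat.one_le_iff_ne_zero.1 (Finset.mem_Ico.1 hi).1)

theorem factorization_factorial_ratio (m p q : ℕ) (hm : 0 < m)
    (hp : p.Prime) (hq : q.Prime) (hpq : p < q) (hqm : q ≤ m) :
    (m.factorial.factorization p) ≥ (q / p) * (m.factorial.factorization q) :=
  factorization_factorial_ratio_general m p q hp hq
end

section
/- Let m be a positive integer and let p < q be primes with q ≤ m. Let k be a positive integer with kp < q. Then ⌊m/p⌋ ≥ k·⌊m/q⌋. -/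
theorem Nat.mul_div_le_div_of_mul_le {m p q k : ℕ} (hp : 0 < p) (hkp : k * p ≤ q) :
    k * (m / q) ≤ m / p := by
  rw [Nat.le_div_iff_mul_le hp]
  calc k * (m / q) * p = m / q * (k * p) := by ring
    _ ≤ m / q * q := Nat.mul_le_mul_left _ hkp
    _ ≤ m := Nat.div_mul_le_self m q

theorem floor_div_ge_general (m p q k : ℕ)
    (hp : p.Prime) (hkp : k * p < q) :
    m / p ≥ k * (m / q) :=
  Nat.mul_div_le_div_of_mul_le hp.pos hkp.le

theorem floor_div_ge (m p q k : ℕ) (hm : 0 < m) (hk : 0 < k)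
    (hp : p.Prime) (hq : q.Prime) (hpq : p < q) (hqm : q ≤ m) (hkp : k * p < q) :
    m / p ≥ k * (m / q) :=
  floor_div_ge_general m p q k hp hkp
end

section
/- Let a_1, ..., a_k be positive real numbers and z > 0. Then the number N_k(z) of k-tuples (ν_1, ..., ν_k) of non-negative integers with Σ ν_i a_i ≤ z satisfies N_k(z) ≤ ((z + Σ_{i=1}^k a_i)^k / k!) · Π_{i=1}^k (1/a_i). -/
/-!
Induct on `k`, slicing by the last coordinate `ν_k = m`, which ranges over `0 ≤ m ≤ z / a_k`:
`N_k(z) ≤ ∑_m N_{k-1}(z - m a_k)`. By induction the `m`-th slice is at most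
`(w - m a_k)^(k-1) / ((k-1)! a_1 ⋯ a_{k-1})` with `w = z + a_1 + ⋯ + a_{k-1}`, and
`k a_k x^(k-1) ≤ (x + a_k)^k - x^k` for `x ≥ 0` makes the sum over `m` telescope to at most
`(w + a_k)^k / (k a_k)`.
-/

open Finset

def simplexLatticePoints {k : ℕ} (a : Fin k → ℝ) (z : ℝ) : Set (Fin k → ℕ) :=
  {ν | ∑ i, (ν i : ℝ) * a i ≤ z}

lemma pow_add_mul_pow_le_add_pow {R : Type*} [CommSemiring R] [PartialOrder R] [IsOrderedRing R]
    {x y : R} (hx : 0 ≤ x) (hy : 0 ≤ y) (n : ℕ) :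
    x ^ (n + 1) + (n + 1) * y * x ^ n ≤ (x + y) ^ (n + 1) := by
  calc x ^ (n + 1) + (n + 1) * y * x ^ n
      = ∑ j ∈ {n, n + 1}, x ^ j * y ^ (n + 1 - j) * ((n + 1).choose j : R) := by
        rw [sum_pair (by omega)]
        simp [Nat.choose_succ_self_right]
        ring
    _ ≤ ∑ j ∈ range (n + 2), x ^ j * y ^ (n + 1 - j) * ((n + 1).choose j : R) := by
        refine sum_le_sum_of_subset_of_nonneg ?_ fun j _ _ => by positivity
        intro j hj
        simp only [mem_insert, mem_singleton] at hj
        rcases hj with rfl | rfl <;> simp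
    _ = (x + y) ^ (n + 1) := (add_pow x y (n + 1)).symm

lemma sum_range_mul_pow_le_pow_succ {α w : ℝ} (hα : 0 ≤ α) {M : ℕ} (hM : M * α ≤ w) (n : ℕ) :
    ∑ m ∈ range (M + 1), (w - m * α) ^ n * ((n + 1) * α) ≤ (w + α) ^ (n + 1) := by
  set g : ℕ → ℝ := fun m => (w + α - m * α) ^ (n + 1)
  calc ∑ m ∈ range (M + 1), (w - m * α) ^ n * ((n + 1) * α)
      ≤ ∑ m ∈ range (M + 1), (g m - g (m + 1)) := by
        refine sum_le_sum fun m hm => ?_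
        have hmM : (m : ℝ) ≤ M := by exact_mod_cast Nat.lt_succ_iff.1 (mem_range.1 hm)
        have hx : 0 ≤ w - m * α := by nlinarith
        have := pow_add_mul_pow_le_add_pow hx hα n
        simp only [g, Nat.cast_add, Nat.cast_one]
        rw [show w + α - m * α = w - m * α + α by ring,
          show w + α - (m + 1) * α = w - m * α by ring]
        linarith
    _ = g 0 - g (M + 1) := sum_range_sub' g (M + 1)
    _ ≤ g 0 := by
        have : 0 ≤ g (M + 1) := pow_nonneg (by push_cast; linarith) _
        linarith
    _ = (w + α) ^ (n + 1) := by simp [g]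

section

variable {k : ℕ} {z : ℝ}

lemma mul_le_of_mem_simplexLatticePoints {a : Fin k → ℝ} (ha : ∀ i, 0 ≤ a i) {ν : Fin k → ℕ}
    (hν : ν ∈ simplexLatticePoints a z) (i : Fin k) : (ν i : ℝ) * a i ≤ z :=
  (single_le_sum (fun j _ => mul_nonneg (Nat.cast_nonneg _) (ha j)) (mem_univ i)).trans hν

lemma simplexLatticePoints_finite {a : Fin k → ℝ} (ha : ∀ i, 0 < a i) :
    (simplexLatticePoints a z).Finite :=
  (Set.Finite.pi fun i => Set.finite_Iic ⌊z / a i⌋₊).subset fun _ hν i _ =>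
    Nat.le_floor <| (le_div_iff₀ (ha i)).2 <|
      mul_le_of_mem_simplexLatticePoints (fun j => (ha j).le) hν i

lemma simplexLatticePoints_subset_biUnion_snoc {a : Fin (k + 1) → ℝ} (ha : ∀ i, 0 < a i) :
    simplexLatticePoints a z ⊆ ⋃ m ∈ range (⌊z / a (Fin.last k)⌋₊ + 1),
      (Fin.snoc (α := fun _ => ℕ) · m) ''
        simplexLatticePoints (Fin.init a) (z - m * a (Fin.last k)) := by
  intro ν hν
  have hlast : ν (Fin.last k) ∈ range (⌊z / a (Fin.last k)⌋₊ + 1) :=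
    mem_range.2 <| Nat.lt_succ_of_le <| Nat.le_floor <| (le_div_iff₀ (ha _)).2 <|
      mul_le_of_mem_simplexLatticePoints (fun j => (ha j).le) hν _
  refine Set.mem_biUnion hlast ⟨Fin.init ν, ?_, Fin.snoc_init_self ν⟩
  have hsum : ∑ i : Fin k, (ν i.castSucc : ℝ) * a i.castSucc
      + ν (Fin.last k) * a (Fin.last k) ≤ z := by
    rw [← Fin.sum_univ_castSucc (fun i => (ν i : ℝ) * a i)]
    exact hν
  simp only [simplexLatticePoints, Set.mem_ofPred_eq, Fin.init]
  linarith

lemma ncard_simplexLatticePoints_le_sum {a : Fin (k + 1) → ℝ} (ha : ∀ i, 0 < a i) :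
    (simplexLatticePoints a z).ncard ≤ ∑ m ∈ range (⌊z / a (Fin.last k)⌋₊ + 1),
      (simplexLatticePoints (Fin.init a) (z - m * a (Fin.last k))).ncard := by
  have hslice : ∀ w, (simplexLatticePoints (Fin.init a) w).Finite :=
    fun w => simplexLatticePoints_finite fun i => ha _
  refine (Set.ncard_le_ncard (simplexLatticePoints_subset_biUnion_snoc ha) ?_).trans <|
    (set_ncard_biUnion_le _ _).trans <| sum_le_sum fun m _ => Set.ncard_image_le (hslice _)
  exact (finite_toSet _).biUnion fun m _ => (hslice _).image _

theorem ncard_simplexLatticePoints_mul_le {a : Fin k → ℝ} (ha : ∀ i, 0 < a i) (hz : 0 ≤ z) :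
    (simplexLatticePoints a z).ncard * (k.factorial : ℝ) * ∏ i, a i ≤ (z + ∑ i, a i) ^ k := by
  induction k generalizing z with
  | zero => simp [simplexLatticePoints, hz]
  | succ k ih =>
    set α := a (Fin.last k)
    set M := ⌊z / α⌋₊
    have hα : 0 < α := ha _
    have hM : (M : ℝ) * α ≤ z := (le_div_iff₀ hα).1 (Nat.floor_le (by positivity))
    have hinit : ∀ i, 0 < Fin.init a i := fun i => ha _
    have hprod : 0 ≤ ∏ i, Fin.init a i := prod_nonneg fun i _ => (hinit i).le
    have hsum : 0 ≤ ∑ i, Fin.init a i := sum_nonneg fun i _ => (hinit i).le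
    calc ((simplexLatticePoints a z).ncard : ℝ) * ((k + 1).factorial : ℝ) * ∏ i, a i
        = (simplexLatticePoints a z).ncard * k.factorial * (∏ i, Fin.init a i)
            * ((k + 1) * α) := by
          rw [Fin.prod_univ_castSucc, Nat.factorial_succ]
          push_cast [Fin.init]
          ring
      _ ≤ ∑ m ∈ range (M + 1), (simplexLatticePoints (Fin.init a) (z - m * α)).ncard
            * (k.factorial : ℝ) * (∏ i, Fin.init a i) * ((k + 1) * α) := by
          simp only [← sum_mul]
          gcongr
          exact_mod_cast ncard_simplexLatticePoints_le_sum ha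
      _ ≤ ∑ m ∈ range (M + 1), (z + ∑ i, Fin.init a i - m * α) ^ k * ((k + 1) * α) := by
          refine sum_le_sum fun m hm => ?_
          have hmM : (m : ℝ) ≤ M := by exact_mod_cast Nat.lt_succ_iff.1 (mem_range.1 hm)
          gcongr
          refine (ih hinit (by nlinarith)).trans_eq ?_
          ring
      _ ≤ (z + ∑ i, Fin.init a i + α) ^ (k + 1) :=
          sum_range_mul_pow_le_pow_succ hα.le (by linarith) k
      _ = (z + ∑ i, a i) ^ (k + 1) := by
          rw [Fin.sum_univ_castSucc, add_assoc]
          rfl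

end

theorem ennola_upper_general (k : ℕ) (a : Fin k → ℝ) (ha : ∀ i, 0 < a i)
    (z : ℝ) (hz : 0 < z) :
    ((Set.ncard {ν : Fin k → ℕ | ∑ i, (ν i : ℝ) * a i ≤ z} : ℝ)) ≤
      (z + ∑ i, a i) ^ k / (k.factorial : ℝ) * ∏ i, (1 / a i) := by
  have hprod : 0 < ∏ i, a i := prod_pos fun i _ => ha i
  rw [prod_div_distrib, prod_const_one, mul_one_div, div_div,
    le_div_iff₀ (by positivity), ← mul_assoc]
  exact ncard_simplexLatticePoints_mul_le ha hz.le

theorem ennola_upper (k : ℕ) (hk : 0 < k) (a : Fin k → ℝ) (ha : ∀ i, 0 < a i)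
    (z : ℝ) (hz : 0 < z) :
    ((Set.ncard {ν : Fin k → ℕ | ∑ i, (ν i : ℝ) * a i ≤ z} : ℝ)) ≤
      (z + ∑ i, a i) ^ k / (k.factorial : ℝ) * ∏ i, (1 / a i) :=
  ennola_upper_general k a ha z hz
end

section
/- For every integer k ≥ 1, the number n_k = 2^(3k+3) · 3^(k+1) has at least k distinct representations as a product of factorials; namely, for each j with 1 ≤ j ≤ k, n_k = (4!)^j · (3!)^(k+1-j) · (2!)^(2(k+1-j)). -/
/-!
Since `4! = 3! · 2! · 2!`, trading a block `{3, 2, 2}` for a single `4` keeps the product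
of factorials. Starting from `k + 1` blocks `{3, 2, 2}`, whose product is
`24 ^ (k + 1) = 2 ^ (3k + 3) · 3 ^ (k + 1)`, and trading `j` of them gives the `k`
representations; they are distinct because they contain `4` with different multiplicities.
-/

open Multiset Nat

def factorialRep (a b : ℕ) : Multiset ℕ :=
  replicate a 4 + replicate b 3 + replicate (2 * b) 2

theorem prod_map_factorial_factorialRep (a b : ℕ) :
    ((factorialRep a b).map Nat.factorial).prod = (4 !) ^ (a + b) := by
  have four_factorial : 4 ! = 3 ! * (2 !) ^ 2 := rfl
  simp only [factorialRep, map_add, map_replicate, prod_add, prod_replicate, pow_mul]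
  rw [mul_assoc, ← mul_pow, ← four_factorial, pow_add]

theorem count_four_factorialRep (a b : ℕ) : count 4 (factorialRep a b) = a := by
  simp [factorialRep, count_replicate]

theorem two_le_of_mem_factorialRep {a b m : ℕ} (hm : m ∈ factorialRep a b) : 2 ≤ m := by
  simp only [factorialRep, mem_add, mem_replicate] at hm
  omega

theorem nk_has_k_reps_general (k : ℕ) :
    ∃ S : Finset (Multiset ℕ), S.card = k ∧
      (∀ s ∈ S, (∀ m ∈ s, 2 ≤ m) ∧
        (s.map Nat.factorial).prod = 2 ^ (3 * k + 3) * 3 ^ (k + 1)) ∧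
      ∀ j, 1 ≤ j → j ≤ k →
        (Multiset.replicate j 4 + Multiset.replicate (k + 1 - j) 3 +
          Multiset.replicate (2 * (k + 1 - j)) 2) ∈ S := by
  let rep : ℕ → Multiset ℕ := fun j => factorialRep j (k + 1 - j)
  have rep_injective : Function.Injective rep := fun i j hij => by
    simpa only [rep, count_four_factorialRep] using congrArg (count 4) hij
  refine ⟨(Finset.Icc 1 k).image rep, ?_, ?_, fun j hj hjk => ?_⟩
  · rw [Finset.card_image_of_injective _ rep_injective, Nat.card_Icc, Nat.add_sub_cancel]
  · intro s hs
    obtain ⟨j, hj, rfl⟩ := Finset.mem_image.mp hs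
    have hjk : j + (k + 1 - j) = k + 1 := by grind
    refine ⟨fun m hm => two_le_of_mem_factorialRep hm, ?_⟩
    rw [prod_map_factorial_factorialRep, hjk, show 3 * k + 3 = 3 * (k + 1) by ring, pow_mul,
      ← mul_pow]
    rfl
  · exact Finset.mem_image_of_mem rep (Finset.mem_Icc.mpr ⟨hj, hjk⟩)

theorem nk_has_k_reps (k : ℕ) (hk : 1 ≤ k) :
    ∃ S : Finset (Multiset ℕ), S.card = k ∧
      (∀ s ∈ S, (∀ m ∈ s, 2 ≤ m) ∧
        (s.map Nat.factorial).prod = 2 ^ (3 * k + 3) * 3 ^ (k + 1)) ∧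
      ∀ j, 1 ≤ j → j ≤ k →
        (Multiset.replicate j 4 + Multiset.replicate (k + 1 - j) 3 +
          Multiset.replicate (2 * (k + 1 - j)) 2) ∈ S :=
  nk_has_k_reps_general k
end

section
/- Every positive integer that can be written as a product of prime factorials has a unique such representation: if Π_{i=1}^r (p_i!)^{α_i} = Π_{i=1}^r (p_i!)^{β_i} where p_1 < p_2 < ... < p_r are the first r primes and α_i, β_i are non-negative integers, then α_i = β_i for all i. -/
open Finset
open scoped Nat

namespace Nat

theorem Prime.factorization_factorial_self {p : ℕ} (hp : p.Prime) : (p !).factorization p = 1 := by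
  rw [← mul_factorial_pred hp.ne_zero, factorization_mul hp.ne_zero (factorial_ne_zero _),
    Finsupp.add_apply, hp.factorization_self,
    factorization_factorial_eq_zero_of_lt (sub_one_lt hp.ne_zero)]

theorem factorization_prod_factorial_pow {ι : Type*} (s : Finset ι) (q a : ι → ℕ) (p : ℕ) :
    (∏ i ∈ s, (q i)! ^ a i).factorization p = ∑ i ∈ s, a i * ((q i)!).factorization p := by
  rw [factorization_prod_apply fun i _ => pow_ne_zero _ (factorial_ne_zero _)]
  simp only [factorization_pow, Finsupp.smul_apply, smul_eq_mul]

/-- The largest prime `q` occurs in `q !` exactly once and in no smaller factorial, so it reads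
off its own exponent. -/
theorem factorization_prod_factorial_pow_last {r : ℕ} {q : Fin (r + 1) → ℕ}
    (hq : StrictMono q) (hprime : (q (Fin.last r)).Prime) (a : Fin (r + 1) → ℕ) :
    (∏ i, (q i)! ^ a i).factorization (q (Fin.last r)) = a (Fin.last r) := by
  rw [factorization_prod_factorial_pow, Fin.sum_univ_castSucc,
    hprime.factorization_factorial_self, mul_one, add_eq_right]
  refine sum_eq_zero fun i _ => ?_
  rw [factorization_factorial_eq_zero_of_lt (hq (Fin.castSucc_lt_last i)), mul_zero]

theorem prod_factorial_pow_injective {r : ℕ} {q : Fin r → ℕ} (hq : StrictMono q)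
    (hprime : ∀ i, (q i).Prime) : Function.Injective fun a : Fin r → ℕ => ∏ i, (q i)! ^ a i := by
  induction r with
  | zero => exact fun _ _ _ => Subsingleton.elim _ _
  | succ r ih =>
    intro a b h
    have hlast : a (Fin.last r) = b (Fin.last r) := by
      rw [← factorization_prod_factorial_pow_last hq (hprime _) a,
        ← factorization_prod_factorial_pow_last hq (hprime _) b]
      exact congrArg (fun n => n.factorization (q (Fin.last r))) h
    have hinit : (fun i => a (Fin.castSucc i)) = fun i => b (Fin.castSucc i) := by
      refine ih (hq.comp Fin.strictMono_castSucc) (fun i => hprime _) ?_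
      simp only [Fin.prod_univ_castSucc, hlast] at h
      exact mul_right_cancel₀ (pow_ne_zero _ (factorial_ne_zero _)) h
    funext i
    exact Fin.lastCases hlast (congrFun hinit) i

end Nat

theorem prime_factorial_rep_unique (r : ℕ) (α β : Fin r → ℕ)
    (h : ∏ i : Fin r, ((Nat.nth Nat.Prime i).factorial) ^ (α i) =
         ∏ i : Fin r, ((Nat.nth Nat.Prime i).factorial) ^ (β i)) :
    α = β :=
  Nat.prod_factorial_pow_injective
    ((Nat.nth_strictMono Nat.infinite_setOfPred_prime).comp Fin.val_strictMono)
    (fun i => Nat.prime_nth_prime i) h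
end
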